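/- arXiv:0807.2547 — 3 statements merged into one kernel-verified Lean document; each statement's English description precedes it below -/
import Mathlib

section
/- For any a ∈ (0,1) and any u ∈ [a,1], one has (1/u - 1)^2 ≤ (2/a) φ(u), where φ(u) = log u + 1/u - 1. -/
/-!
Since `log u ≤ 0` on `(0, 1]`, `sinh (log u) ≤ log u`, i.e. `(u - u⁻¹) / 2 ≤ log u`. As
`(2/u) φ(u) - (1/u - 1)² = (2/u) (log u - (u - u⁻¹) / 2)`, this gives `(1/u - 1)² ≤ (2/u) φ(u)`,
and `2/u ≤ 2/a` finishes the proof because `φ ≥ 0`.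
-/

open Real

lemma half_sub_inv_le_log {u : ℝ} (hu0 : 0 < u) (hu1 : u ≤ 1) : (u - u⁻¹) / 2 ≤ log u := by
  rw [← sinh_log hu0]
  exact sinh_le_self_iff.2 (log_nonpos hu0.le hu1)

lemma sq_one_div_sub_one_le_two_div_mul {u : ℝ} (hu0 : 0 < u) (hu1 : u ≤ 1) :
    (1 / u - 1) ^ 2 ≤ (2 / u) * (log u + 1 / u - 1) := by
  have hlog := half_sub_inv_le_log hu0 hu1
  have hdiff : (2 / u) * (log u + 1 / u - 1) - (1 / u - 1) ^ 2
      = (2 / u) * (log u - (u - u⁻¹) / 2) := by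
    field_simp
    ring
  have : 0 ≤ (2 / u) * (log u - (u - u⁻¹) / 2) := by
    have : 0 ≤ log u - (u - u⁻¹) / 2 := by linarith
    positivity
  linarith

lemma log_add_one_div_sub_one_nonneg {u : ℝ} (hu0 : 0 < u) : 0 ≤ log u + 1 / u - 1 := by
  linarith [one_sub_inv_le_log_of_pos hu0, one_div u]

theorem stmt_1_general (a u : ℝ) (ha0 : 0 < a) (hau : a ≤ u) (hu1 : u ≤ 1) :
    (1 / u - 1) ^ 2 ≤ (2 / a) * (Real.log u + 1 / u - 1) := by
  have hu0 : 0 < u := ha0.trans_le hau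
  calc (1 / u - 1) ^ 2 ≤ (2 / u) * (log u + 1 / u - 1) := sq_one_div_sub_one_le_two_div_mul hu0 hu1
    _ ≤ (2 / a) * (log u + 1 / u - 1) :=
      mul_le_mul_of_nonneg_right (div_le_div_of_nonneg_left zero_le_two ha0 hau)
        (log_add_one_div_sub_one_nonneg hu0)

theorem stmt_1 (a u : ℝ) (ha0 : 0 < a) (ha1 : a < 1) (hau : a ≤ u) (hu1 : u ≤ 1) :
    (1 / u - 1) ^ 2 ≤ (2 / a) * (Real.log u + 1 / u - 1) :=
  stmt_1_general a u ha0 hau hu1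
end

section
/- Let s, σ ∈ ℝⁿ with σ_i > 0, let S ⊂ ℝⁿ be a linear subspace with orthogonal projection π, let p be a partition of {1,…,n}, and let Σ_p be the space of vectors constant on each block of p. Suppose S is compatible with p in the sense that π maps vectors supported on each block I ∈ p to vectors supported on I. Define s_m = πs and σ_m constant on each block I with value σ_{m,I} = (1/|I|)·Σ_{i∈I}[(s_i - s_{m,i})² + σ_i]. Then (s_m, σ_m) minimizes (t,τ) ↦ KL(P_{s,σ}, P_{t,τ}) over S × Σ_p, and the minimum equals (1/2)·Σ_{I∈p} Σ_{i∈I} log(σ_{m,I}/σ_i). -/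
/-!
Compatibility makes `S` stable under restriction to a block, so the residual `s - π s` is
orthogonal to `S` on every block separately, hence also for every block-constant weight `1/τ`:
this gives the weighted Pythagoras inequality `∑ (s - π s)²/τ ≤ ∑ (s - t)²/τ`. For block-constant
`τ`, the terms `((s - π s)² + σ)/τ` may then be replaced by their block averages `σ_m/τ`, and
`log (σ_m/σ) ≤ σ_m/τ + log (τ/σ) - 1` is `log x ≤ x - 1` at `x = σ_m/τ`, with equality at `τ = σ_m`.
-/

open Finset

section Blocks

variable {κ ι : Type*} (blk : κ → ι)

def IsBlockConst (w : κ → ℝ) : Prop :=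
  ∀ i j, blk i = blk j → w i = w j

lemma IsBlockConst.inv {blk : κ → ι} {w : κ → ℝ} (hw : IsBlockConst blk w) :
    IsBlockConst blk w⁻¹ :=
  fun i j h => by simp only [Pi.inv_apply, hw i j h]

variable [Fintype κ] [DecidableEq ι]

noncomputable def blockAverage (f : κ → ℝ) (i : κ) : ℝ :=
  (∑ j ∈ univ.filter fun j => blk j = blk i, f j) / #(univ.filter fun j => blk j = blk i)

lemma isBlockConst_blockAverage (f : κ → ℝ) : IsBlockConst blk (blockAverage blk f) :=
  fun i j h => by simp only [blockAverage, h]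

lemma blockAverage_pos {f : κ → ℝ} (hf : ∀ i, 0 < f i) (i : κ) : 0 < blockAverage blk f i := by
  have hi : i ∈ univ.filter fun j => blk j = blk i := by simp
  exact div_pos (sum_pos (fun j _ => hf j) ⟨i, hi⟩) (by exact_mod_cast card_pos.2 ⟨i, hi⟩)

lemma sum_blockAverage_mul {w : κ → ℝ} (hw : IsBlockConst blk w) (f : κ → ℝ) :
    ∑ i, blockAverage blk f i * w i = ∑ i, f i * w i := by
  set F : κ → Finset κ := fun i => univ.filter fun j => blk j = blk i
  have hF : ∀ i j, j ∈ F i ↔ blk j = blk i := by simp [F]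
  have hF_ne : ∀ j, (#(F j) : ℝ) ≠ 0 := fun j => by
    exact_mod_cast (card_pos.2 ⟨j, (hF j j).2 rfl⟩).ne'
  calc ∑ i, blockAverage blk f i * w i
      = ∑ i, ∑ j ∈ F i, f j * w j / #(F j) := by
        refine sum_congr rfl fun i _ => ?_
        rw [blockAverage, div_mul_eq_mul_div, sum_mul, sum_div]
        refine sum_congr rfl fun j hj => ?_
        have hji := (hF i j).1 hj
        have hFji : F j = F i := by ext k; simp only [hF, hji]
        rw [hw j i hji, hFji]
    _ = ∑ j, ∑ i ∈ F j, f j * w j / #(F j) :=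
        sum_comm' fun i j => by simp only [mem_univ, true_and, and_true, hF, eq_comm]
    _ = ∑ j, f j * w j := by
        refine sum_congr rfl fun j _ => ?_
        rw [sum_const, nsmul_eq_mul, mul_div_cancel₀ _ (hF_ne j)]

end Blocks

section Projection

variable {κ : Type*} [Fintype κ] {S : Submodule ℝ (κ → ℝ)} {π : (κ → ℝ) →ₗ[ℝ] (κ → ℝ)}

/-- If `x := A.indicator y` and `e := x - π x`, then `e` vanishes off `A`, where `x = y`, so
`e ⬝ᵥ e = e ⬝ᵥ y - e ⬝ᵥ π x = 0`. -/
lemma indicator_mem_of_preserves_support (hπ_range : ∀ x, π x ∈ S)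
    (hπ_orth : ∀ x, ∀ y ∈ S, (x - π x) ⬝ᵥ y = 0) {A : Set κ}
    (hA : ∀ x : κ → ℝ, (∀ i ∉ A, x i = 0) → ∀ i ∉ A, π x i = 0)
    {y : κ → ℝ} (hy : y ∈ S) : A.indicator y ∈ S := by
  set x := A.indicator y
  set e := x - π x with he_def
  have he : ∀ i ∉ A, e i = 0 := fun i hi => by
    simp [e, x, hA x (fun i hi => Set.indicator_of_notMem hi y) i hi, Set.indicator_of_notMem hi]
  have hex : e ⬝ᵥ x = e ⬝ᵥ y := by
    refine sum_congr rfl fun i _ => ?_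
    by_cases hi : i ∈ A
    · simp [x, hi]
    · simp [he i hi]
  have hee : e ⬝ᵥ e = 0 := by
    calc e ⬝ᵥ e = e ⬝ᵥ x - e ⬝ᵥ π x := by rw [he_def, dotProduct_sub]
      _ = 0 := by rw [hex, hπ_orth x y hy, hπ_orth x _ (hπ_range x), sub_zero]
  have hx : x = π x := sub_eq_zero.1 (dotProduct_self_eq_zero.1 hee)
  rw [hx]
  exact hπ_range x

variable {ι : Type*} [DecidableEq ι] {blk : κ → ι} (hπ_range : ∀ x, π x ∈ S)
  (hπ_orth : ∀ x, ∀ y ∈ S, (x - π x) ⬝ᵥ y = 0)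
  (hcompat : ∀ (j : ι) (x : κ → ℝ), (∀ i, blk i ≠ j → x i = 0) → ∀ i, blk i ≠ j → π x i = 0)
include hπ_range hπ_orth hcompat

lemma sum_sub_mul_mul_eq_zero_of_isBlockConst (s : κ → ℝ) {y w : κ → ℝ} (hy : y ∈ S)
    (hw : IsBlockConst blk w) : ∑ i, (s i - π s i) * y i * w i = 0 := by
  have hblock : ∀ i, blockAverage blk (fun i => (s i - π s i) * y i) i = 0 := by
    intro i
    have hmem := indicator_mem_of_preserves_support hπ_range hπ_orth
      (A := blk ⁻¹' {blk i}) (hcompat (blk i)) hy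
    have hsum : ∑ j ∈ univ.filter fun j => blk j = blk i, (s j - π s j) * y j
        = (s - π s) ⬝ᵥ (blk ⁻¹' {blk i}).indicator y := by
      rw [sum_filter]
      refine sum_congr rfl fun j _ => ?_
      by_cases h : blk j = blk i <;> simp [h]
    rw [blockAverage, hsum, hπ_orth s _ hmem, zero_div]
  rw [← sum_blockAverage_mul blk hw]
  simp [hblock]

lemma sum_sub_sq_div_le {τ : κ → ℝ} (hτ : ∀ i, 0 < τ i) (hτ_const : IsBlockConst blk τ)
    (s : κ → ℝ) {t : κ → ℝ} (ht : t ∈ S) :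
    ∑ i, (s i - π s i) ^ 2 / τ i ≤ ∑ i, (s i - t i) ^ 2 / τ i := by
  have hcross := sum_sub_mul_mul_eq_zero_of_isBlockConst hπ_range hπ_orth hcompat s
    (S.sub_mem (hπ_range s) ht) hτ_const.inv
  have hexpand : ∀ i, (s i - t i) ^ 2 / τ i = (s i - π s i) ^ 2 / τ i
      + 2 * ((s i - π s i) * (π s - t) i * τ⁻¹ i) + (π s i - t i) ^ 2 / τ i := fun i => by
    simp only [Pi.sub_apply, Pi.inv_apply]
    ring
  rw [sum_congr rfl fun i _ => hexpand i, sum_add_distrib, sum_add_distrib, ← mul_sum, hcross]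
  have := sum_nonneg fun i (_ : i ∈ univ) => div_nonneg (sq_nonneg (π s i - t i)) (hτ i).le
  linarith

end Projection

lemma log_div_le_div_add_log_div_sub_one {a τ σ : ℝ} (ha : 0 < a) (hτ : 0 < τ) (hσ : 0 < σ) :
    Real.log (a / σ) ≤ a / τ + (Real.log (τ / σ) - 1) := by
  have hsplit : Real.log (a / σ) = Real.log (a / τ) + Real.log (τ / σ) := by
    rw [← Real.log_mul (div_pos ha hτ).ne' (div_pos hτ hσ).ne', div_mul_div_cancel₀ hτ.ne']
  have := Real.log_le_sub_one_of_pos (div_pos ha hτ)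
  linarith

lemma sum_gaussianKL_summand_eq {κ : Type*} [Fintype κ] (s t σ τ : κ → ℝ) :
    ∑ i, ((s i - t i) ^ 2 / τ i + (Real.log (τ i / σ i) + 1 / (τ i / σ i) - 1))
      = ∑ i, ((s i - t i) ^ 2 + σ i) / τ i + ∑ i, (Real.log (τ i / σ i) - 1) := by
  rw [← sum_add_distrib]
  refine sum_congr rfl fun i _ => ?_
  rw [one_div_div, add_div]
  ring

theorem stmt_15_general {n : ℕ} {ι : Type*} [DecidableEq ι]
    (blk : Fin n → ι) (S : Submodule ℝ (Fin n → ℝ))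
    (π : (Fin n → ℝ) →ₗ[ℝ] (Fin n → ℝ))
    (hπ_range : ∀ x, π x ∈ S)
    (hπ_orth : ∀ x, ∀ y ∈ S, ∑ i, (x i - π x i) * y i = 0)
    (hcompat : ∀ (j : ι) (x : Fin n → ℝ),
      (∀ i, blk i ≠ j → x i = 0) → ∀ i, blk i ≠ j → π x i = 0)
    (s σ : Fin n → ℝ) (hσ : ∀ i, 0 < σ i)
    (kl : (Fin n → ℝ) → (Fin n → ℝ) → ℝ)
    (hkl : ∀ t τ, kl t τ = (1 / 2) * ∑ i, ((s i - t i) ^ 2 / τ i +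
      (Real.log (τ i / σ i) + 1 / (τ i / σ i) - 1)))
    (σm : Fin n → ℝ)
    (hσm : ∀ i, σm i = (∑ j ∈ univ.filter fun j => blk j = blk i,
      ((s j - π s j) ^ 2 + σ j)) / (univ.filter fun j => blk j = blk i).card) :
    (∀ t τ, t ∈ S → (∀ i, 0 < τ i) → (∀ i j, blk i = blk j → τ i = τ j) →
        kl (π s) σm ≤ kl t τ) ∧
      kl (π s) σm = (1 / 2) * ∑ i, Real.log (σm i / σ i) := by
  have hσm_avg : σm = blockAverage blk fun j => (s j - π s j) ^ 2 + σ j := funext hσm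
  have hσm_pos : ∀ i, 0 < σm i := hσm_avg ▸ blockAverage_pos blk fun i => by positivity [hσ i]
  have hkl_split : ∀ t τ, kl t τ =
      (1 / 2) * (∑ i, ((s i - t i) ^ 2 + σ i) / τ i + ∑ i, (Real.log (τ i / σ i) - 1)) :=
    fun t τ => by rw [hkl, sum_gaussianKL_summand_eq]
  have hgroup : ∀ τ, IsBlockConst blk τ →
      ∑ i, ((s i - π s i) ^ 2 + σ i) / τ i = ∑ i, σm i / τ i := by
    intro τ hτ
    simpa only [div_eq_mul_inv, hσm_avg, Pi.inv_apply] using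
      (sum_blockAverage_mul blk hτ.inv _).symm
  have hvalue : kl (π s) σm = (1 / 2) * ∑ i, Real.log (σm i / σ i) := by
    rw [hkl_split, hgroup σm (hσm_avg ▸ isBlockConst_blockAverage blk _),
      sum_congr rfl fun i _ => div_self (hσm_pos i).ne', ← sum_add_distrib]
    simp
  refine ⟨fun t τ ht hτ hτ_const => ?_, hvalue⟩
  have hpyth := sum_sub_sq_div_le hπ_range hπ_orth hcompat hτ hτ_const s ht
  rw [hvalue, hkl_split]
  gcongr
  calc ∑ i, Real.log (σm i / σ i)
      ≤ ∑ i, σm i / τ i + ∑ i, (Real.log (τ i / σ i) - 1) := by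
        rw [← sum_add_distrib]
        exact sum_le_sum fun i _ => log_div_le_div_add_log_div_sub_one (hσm_pos i) (hτ i) (hσ i)
    _ = ∑ i, ((s i - π s i) ^ 2 + σ i) / τ i + ∑ i, (Real.log (τ i / σ i) - 1) := by
        rw [hgroup τ hτ_const]
    _ ≤ ∑ i, ((s i - t i) ^ 2 + σ i) / τ i + ∑ i, (Real.log (τ i / σ i) - 1) := by
        simp only [add_div, sum_add_distrib]
        linarith

/-- Statement: the pair `(π s, σ_m)` minimizes the Kullback-Leibler divergence
`(t, τ) ↦ KL(P_{s,σ}, P_{t,τ})` over `S × Σ_p` and the minimum value is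
`(1/2) ∑_i log (σ_{m,I(i)} / σ_i)`. -/
theorem stmt_15 {n : ℕ} {ι : Type*} [Fintype ι] [DecidableEq ι]
    (blk : Fin n → ι) (S : Submodule ℝ (Fin n → ℝ))
    (π : (Fin n → ℝ) →ₗ[ℝ] (Fin n → ℝ))
    (hπ_range : ∀ x, π x ∈ S)
    (hπ_fix : ∀ y ∈ S, π y = y)
    (hπ_orth : ∀ x, ∀ y ∈ S, ∑ i, (x i - π x i) * y i = 0)
    (hcompat : ∀ (j : ι) (x : Fin n → ℝ),
      (∀ i, blk i ≠ j → x i = 0) → ∀ i, blk i ≠ j → π x i = 0)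
    (s σ : Fin n → ℝ) (hσ : ∀ i, 0 < σ i)
    (kl : (Fin n → ℝ) → (Fin n → ℝ) → ℝ)
    (hkl : ∀ t τ, kl t τ = (1 / 2) * ∑ i, ((s i - t i) ^ 2 / τ i +
      (Real.log (τ i / σ i) + 1 / (τ i / σ i) - 1)))
    (σm : Fin n → ℝ)
    (hσm : ∀ i, σm i = (∑ j ∈ univ.filter fun j => blk j = blk i,
      ((s j - π s j) ^ 2 + σ j)) / (univ.filter fun j => blk j = blk i).card) :
    (∀ t τ, t ∈ S → (∀ i, 0 < τ i) → (∀ i j, blk i = blk j → τ i = τ j) →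
        kl (π s) σm ≤ kl t τ) ∧
      kl (π s) σm = (1 / 2) * ∑ i, Real.log (σm i / σ i) :=
  stmt_15_general blk S π hπ_range hπ_orth hcompat s σ hσ kl hkl σm hσm
end

section
/- Let f : [0,1] → ℝ be α-Hölderian with constant L (|f(x)-f(y)| ≤ L|x-y|^α for all x,y), let n ≥ 1, define s ∈ ℝⁿ by s_i = f(i/n), and let p be a regular partition of {1,…,n} into D blocks of equal size (D divides n). Let s̄ ∈ ℝⁿ be the vector equal on each block I of p to the mean (1/|I|)Σ_{i∈I} s_i. Then ‖s - s̄‖² ≤ n L² D^{-2α}. -/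
/-!
Two sample points `(i+1)/n`, `(j+1)/n` in the same block lie less than `(n/D)/n = 1/D` apart, so
Hölder continuity puts their values within `L D^{-α}` of each other. The deviation of `s i` from
its block mean is the block mean of `s i - s j`, hence also at most `L D^{-α}`; squaring and
summing over the `n` indices gives the bound.
-/

open Finset
open scoped BigOperators

lemma Finset.abs_sub_expect_le {ι K : Type*} [Field K] [LinearOrder K] [IsStrictOrderedRing K]
    {s : Finset ι} {f : ι → K} {a c : K} (hs : s.Nonempty) (h : ∀ j ∈ s, |a - f j| ≤ c) :
    |a - 𝔼 j ∈ s, f j| ≤ c := by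
  rw [← expect_const hs a, ← expect_sub_distrib]
  exact (abs_expect_le _ _).trans (expect_le hs h)

lemma Nat.abs_sub_lt_of_div_eq {m i j : ℕ} (hm : 0 < m) (h : i / m = j / m) :
    |(i : ℤ) - j| < m := by
  have hi : ((i % m : ℕ) : ℤ) + m * ((j / m : ℕ) : ℤ) = i := by
    rw [← h]; exact_mod_cast Nat.mod_add_div i m
  have hj : ((j % m : ℕ) : ℤ) + m * ((j / m : ℕ) : ℤ) = j := by
    exact_mod_cast Nat.mod_add_div j m
  rw [← hi, ← hj, add_sub_add_right_eq_sub]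
  exact Int.abs_sub_lt_of_lt_lt (Nat.mod_lt j hm) (Nat.mod_lt i hm)

lemma abs_sub_le_inv_of_div_eq {n D i j : ℕ} (hn : 0 < n) (hD : 0 < D) (hdvd : D ∣ n)
    (h : i / (n / D) = j / (n / D)) :
    |((i : ℝ) + 1) / n - ((j : ℝ) + 1) / n| ≤ (D : ℝ)⁻¹ := by
  have hn0 : (0 : ℝ) < n := by exact_mod_cast hn
  have hblock : |(i : ℝ) - j| ≤ n / D := by
    rw [← Nat.cast_div hdvd (by positivity)]
    have hm := Nat.abs_sub_lt_of_div_eq (Nat.div_pos (Nat.le_of_dvd hn hdvd) hD) h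
    have hm' : (((|(i : ℤ) - j|) : ℤ) : ℝ) < ((n / D : ℕ) : ℤ) := Int.cast_lt.2 hm
    push_cast at hm'
    exact hm'.le
  calc |((i : ℝ) + 1) / n - ((j : ℝ) + 1) / n| = |(i : ℝ) - j| / n := by
        rw [← sub_div, abs_div, abs_of_pos hn0, add_sub_add_right_eq_sub]
    _ ≤ n / D / n := by gcongr
    _ = (D : ℝ)⁻¹ := by field_simp

lemma add_one_div_mem_Icc {n : ℕ} (i : Fin n) : ((i : ℝ) + 1) / n ∈ Set.Icc (0 : ℝ) 1 := by
  have hn : (0 : ℝ) < n := by exact_mod_cast i.pos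
  refine ⟨by positivity, (div_le_one hn).2 ?_⟩
  exact_mod_cast i.isLt

theorem stmt_16_general (α L : ℝ) (hα0 : 0 < α) (hL : 0 < L)
    (f : ℝ → ℝ)
    (hf : ∀ x ∈ Set.Icc (0 : ℝ) 1, ∀ y ∈ Set.Icc (0 : ℝ) 1, |f x - f y| ≤ L * |x - y| ^ α)
    (n D : ℕ) (hn : 0 < n) (hD : 0 < D) (hdvd : D ∣ n)
    (s : Fin n → ℝ) (hs : ∀ i : Fin n, s i = f (((i : ℕ) + 1) / n))
    (sbar : Fin n → ℝ)
    (hsbar : ∀ i : Fin n, sbar i =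
      (∑ j ∈ univ.filter fun j : Fin n => (j : ℕ) / (n / D) = (i : ℕ) / (n / D), s j) /
        (univ.filter fun j : Fin n => (j : ℕ) / (n / D) = (i : ℕ) / (n / D)).card) :
    ∑ i, (s i - sbar i) ^ 2 ≤ n * L ^ 2 * (D : ℝ) ^ (-(2 * α)) := by
  have hD0 : (0 : ℝ) ≤ D := D.cast_nonneg
  have hclose : ∀ i j : Fin n, (j : ℕ) / (n / D) = (i : ℕ) / (n / D) →
      |s i - s j| ≤ L * (D : ℝ) ^ (-α) := fun i j hij => by
    rw [hs, hs, Real.rpow_neg hD0, ← Real.inv_rpow hD0]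
    refine (hf _ (add_one_div_mem_Icc i) _ (add_one_div_mem_Icc j)).trans ?_
    gcongr
    exact abs_sub_le_inv_of_div_eq hn hD hdvd hij.symm
  have hmean : ∀ i, |s i - sbar i| ≤ L * (D : ℝ) ^ (-α) := fun i => by
    rw [hsbar, ← expect_eq_sum_div_card]
    exact abs_sub_expect_le ⟨i, mem_filter.2 ⟨mem_univ i, rfl⟩⟩ fun j hj =>
      hclose i j (mem_filter.1 hj).2
  calc ∑ i, (s i - sbar i) ^ 2 ≤ ∑ _i : Fin n, (L * (D : ℝ) ^ (-α)) ^ 2 :=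
        sum_le_sum fun i _ => by
          simpa only [sq_abs] using pow_le_pow_left₀ (abs_nonneg _) (hmean i) 2
    _ = n * L ^ 2 * (D : ℝ) ^ (-(2 * α)) := by
        rw [sum_const, card_univ, Fintype.card_fin, nsmul_eq_mul, mul_pow,
          ← Real.rpow_mul_natCast hD0]
        ring_nf

theorem stmt_16 (α L : ℝ) (hα0 : 0 < α) (hα1 : α ≤ 1) (hL : 0 < L)
    (f : ℝ → ℝ)
    (hf : ∀ x ∈ Set.Icc (0 : ℝ) 1, ∀ y ∈ Set.Icc (0 : ℝ) 1, |f x - f y| ≤ L * |x - y| ^ α)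
    (n D : ℕ) (hn : 0 < n) (hD : 0 < D) (hdvd : D ∣ n)
    (s : Fin n → ℝ) (hs : ∀ i : Fin n, s i = f (((i : ℕ) + 1) / n))
    (sbar : Fin n → ℝ)
    (hsbar : ∀ i : Fin n, sbar i =
      (∑ j ∈ univ.filter fun j : Fin n => (j : ℕ) / (n / D) = (i : ℕ) / (n / D), s j) /
        (univ.filter fun j : Fin n => (j : ℕ) / (n / D) = (i : ℕ) / (n / D)).card) :
    ∑ i, (s i - sbar i) ^ 2 ≤ n * L ^ 2 * (D : ℝ) ^ (-(2 * α)) :=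
  stmt_16_general α L hα0 hL f hf n D hn hD hdvd s hs sbar hsbar
end
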